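/- Let $A$ be a unital associative ring and let $k > 1$ be an integer. Then for all $g_1, \dots, g_{k-1}, f_1, f_2, f_3, f_4 \in A$, the element $[g_1, \dots, g_{k-1}, f_1][f_2, f_3, f_4] + [g_1, \dots, g_{k-1}, f_4][f_2, f_3, f_1]$ belongs to $T^{(k+2)}(A)$. -/
import Mathlib


/-- The ring commutator `[a, b] = a * b - b * a`. -/
def brk {A : Type*} [NonUnitalNonAssocRing A] (a b : A) : A := a * b - b * a

/-- The left-normed commutator `[a 0, a 1, ..., a (k-1)]`. -/
def lnc {A : Type*} [NonUnitalNonAssocRing A] : ∀ {k : ℕ}, (Fin k → A) → A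
  | 0, _ => 0
  | 1, a => a 0
  | k + 2, a => brk (lnc (Fin.init a)) (a (Fin.last (k + 1)))

/-- `T A m` is the two-sided ideal of `A` generated by all left-normed commutators
of length `m` (for `m = 1` this is all of `A`). -/
def T (A : Type*) [NonUnitalNonAssocRing A] (m : ℕ) : TwoSidedIdeal A :=
  TwoSidedIdeal.span {x | ∃ a : Fin m → A, x = lnc a}

lemma lnc_snoc {A : Type*} [NonUnitalNonAssocRing A] {n : ℕ} (a : Fin (n + 1) → A) (x : A) :
    lnc (Fin.snoc a x) = brk (lnc a) x := by
  show brk (lnc (Fin.init (Fin.snoc a x : Fin (n + 2) → A)))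
      ((Fin.snoc a x : Fin (n + 2) → A) (Fin.last (n + 1))) = _
  rw [Fin.init_snoc, Fin.snoc_last]

lemma lnc_three {A : Type*} [NonUnitalNonAssocRing A] (a b c : A) :
    lnc ![a, b, c] = brk (brk a b) c := rfl

lemma key {A : Type*} [Ring A] (I : TwoSidedIdeal A) (u x z p q : A)
    (h : ∀ a b c : A, brk (brk (brk u a) b) c ∈ I) :
    brk u x * brk (brk p q) z + brk u z * brk (brk p q) x ∈ I := by
  have e : brk u x * brk (brk p q) z + brk u z * brk (brk p q) x =
      brk (brk (brk u x) p) q * z - brk (brk (brk u x) q) p * z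
      + q * brk (brk (brk u z) x) p - brk (brk (brk u z) x) p * q
      - p * brk (brk (brk u z) x) q + brk (brk (brk u z) x) q * p
      + brk (brk (brk u z) p) q * x - brk (brk (brk u z) q) p * x
      - brk (brk (brk u (x * z)) p) q + brk (brk (brk u (x * z)) q) p := by
    simp only [brk]
    noncomm_ring
  rw [e]
  exact I.add_mem (I.sub_mem (I.sub_mem (I.add_mem (I.add_mem (I.sub_mem (I.sub_mem
    (I.add_mem
      (I.sub_mem (I.mul_mem_right _ _ (h x p q)) (I.mul_mem_right _ _ (h x q p)))
      (I.mul_mem_left _ _ (h z x p)))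
    (I.mul_mem_right _ _ (h z x p)))
    (I.mul_mem_left _ _ (h z x q)))
    (I.mul_mem_right _ _ (h z x q)))
    (I.mul_mem_right _ _ (h z p q)))
    (I.mul_mem_right _ _ (h z q p)))
    (h (x * z) p q))
    (h (x * z) q p)

theorem comm_mul_comm3_add_swap14_mem {A : Type*} [Ring A] (k : ℕ) (hk : 1 < k)
    (g : Fin (k - 1) → A) (f₁ f₂ f₃ f₄ : A) :
    lnc (Fin.snoc g f₁) * lnc ![f₂, f₃, f₄] + lnc (Fin.snoc g f₄) * lnc ![f₂, f₃, f₁]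
      ∈ T A (k + 2) := by
  obtain ⟨m, rfl⟩ : ∃ m, k = m + 2 := ⟨k - 2, by omega⟩
  have hgen : ∀ a b c : A, brk (brk (brk (lnc g) a) b) c ∈ T A (m + 2 + 2) := by
    intro a b c
    exact TwoSidedIdeal.subset_span
      ⟨Fin.snoc (Fin.snoc (Fin.snoc g a) b) c, by rw [lnc_snoc, lnc_snoc, lnc_snoc]⟩
  rw [lnc_three, lnc_three, lnc_snoc, lnc_snoc]
  exact key _ (lnc g) f₁ f₄ f₂ f₃ hgen
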